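/- arXiv:1701.08498 — 6 statements merged into one kernel-verified Lean document; each statement's English description precedes it below -/
import Mathlib

section
/- For any vector x ∈ ℝⁿ and integer k with 1 ≤ k ≤ n, ‖x‖₀ ≤ k if and only if ‖x‖₁ − |||x|||_{k,1} = 0, where ‖x‖₀ is the number of nonzero entries, ‖x‖₁ is the ℓ₁-norm, and |||x|||_{k,1} is the sum of the k largest absolute values of entries of x. -/
/-! Since `i ↦ |x (π i)|` is antitone, the support of `x ∘ π` is an initial segment of `Fin n`,
so it has at most `k` elements iff it lies in `{i | i < k}`. On the other side, the ℓ₁-norm minus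
the top-`k` sum is the sum of `|x (π i)|` over `i ≥ k`, which vanishes iff those entries do. -/

/-- ℓ₀ "norm": number of nonzero entries. -/
noncomputable def l0norm {n : ℕ} (x : Fin n → ℝ) : ℕ :=
  (Finset.univ.filter fun i => x i ≠ 0).card

open Finset

theorem l0norm_comp_perm {n : ℕ} (x : Fin n → ℝ) (π : Equiv.Perm (Fin n)) :
    l0norm (x ∘ π) = l0norm x := by
  unfold l0norm
  rw [← card_map π.toEmbedding]
  congr 1
  ext i
  simp

theorem sum_sub_sum_eq_zero_iff_of_nonneg {ι M : Type*} [Fintype ι] [AddCommGroup M]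
    [PartialOrder M] [IsOrderedAddMonoid M] {f : ι → M} (hf : ∀ i, 0 ≤ f i) (s : Finset ι) :
    (∑ i, f i) - ∑ i ∈ s, f i = 0 ↔ ∀ i ∉ s, f i = 0 := by
  classical
  rw [← sum_compl_add_sum s, add_sub_cancel_right, sum_eq_zero_iff_of_nonneg fun i _ => hf i]
  simp only [mem_compl]

theorem Fin.card_le_of_forall_val_lt {n k : ℕ} {s : Finset (Fin n)} (h : ∀ i ∈ s, (i : ℕ) < k) :
    #s ≤ k := by
  simpa using
    card_le_card_of_injOn Fin.val (fun i hi => mem_range.2 (h i hi)) Fin.val_injective.injOn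

theorem Fin.val_lt_card_of_isLowerSet {n : ℕ} {s : Finset (Fin n)}
    (hs : IsLowerSet (s : Set (Fin n))) {i : Fin n} (hi : i ∈ s) : (i : ℕ) < #s := by
  have : Iic i ⊆ s := fun j hj => hs (mem_Iic.1 hj) hi
  simpa [Fin.card_Iic] using card_le_card this

theorem Fin.card_le_iff_forall_val_lt_of_isLowerSet {n k : ℕ} {s : Finset (Fin n)}
    (hs : IsLowerSet (s : Set (Fin n))) : #s ≤ k ↔ ∀ i ∈ s, (i : ℕ) < k :=
  ⟨fun h _ hi => (Fin.val_lt_card_of_isLowerSet hs hi).trans_le h, Fin.card_le_of_forall_val_lt⟩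

theorem isLowerSet_support_of_antitone_abs {α M : Type*} [Preorder α] [AddCommGroup M]
    [LinearOrder M] [IsOrderedAddMonoid M] {f : α → M} (hf : Antitone fun i => |f i|) :
    IsLowerSet (Function.support f) := fun _ _ hji hi =>
  abs_pos.1 ((abs_pos.2 hi).trans_le (hf hji))

theorem l0_le_iff_l1_sub_topk1_eq_zero_general {n k : ℕ}
    (x : Fin n → ℝ) (π : Equiv.Perm (Fin n))
    (hsort : ∀ i j : Fin n, i ≤ j → |x (π j)| ≤ |x (π i)|) :
    l0norm x ≤ k ↔
      (∑ i, |x i|) - (∑ i ∈ Finset.univ.filter fun i : Fin n => (i : ℕ) < k, |x (π i)|) = 0 := by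
  have hsupp : IsLowerSet ((univ.filter fun i => (x ∘ π) i ≠ 0 : Finset (Fin n)) : Set (Fin n)) := by
    simpa [Function.support] using isLowerSet_support_of_antitone_abs (f := x ∘ π) hsort
  rw [← Equiv.sum_comp π, sum_sub_sum_eq_zero_iff_of_nonneg (fun _ => abs_nonneg _),
    ← l0norm_comp_perm x π, l0norm, Fin.card_le_iff_forall_val_lt_of_isLowerSet hsupp]
  simp only [mem_filter, mem_univ, true_and, abs_eq_zero, Function.comp_apply]
  exact forall_congr' fun i => not_imp_comm

theorem l0_le_iff_l1_sub_topk1_eq_zero {n k : ℕ} (hk1 : 1 ≤ k) (hkn : k ≤ n)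
    (x : Fin n → ℝ) (π : Equiv.Perm (Fin n))
    (hsort : ∀ i j : Fin n, i ≤ j → |x (π j)| ≤ |x (π i)|) :
    l0norm x ≤ k ↔
      (∑ i, |x i|) - (∑ i ∈ Finset.univ.filter fun i : Fin n => (i : ℕ) < k, |x (π i)|) = 0 :=
  l0_le_iff_l1_sub_topk1_eq_zero_general x π hsort
end

section
/- Let ν: ℝ → ℝ≥0 satisfy ν(a) = 0 iff a = 0. For x ∈ ℝⁿ, let ν(x_{π(1)}) ≥ ⋯ ≥ ν(x_{π(n)}) be the values ν(x₁),…,ν(xₙ) sorted in decreasing order. Then for integers 1 ≤ k < h ≤ n: ‖x‖₀ ≤ k if and only if ∑_{i=1}^{h} ν(x_{π(i)}) − ∑_{i=1}^{k} ν(x_{π(i)}) = 0. -/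
open Finset

section Antitone

variable {α M : Type*} [LinearOrder α] [PartialOrder M] {g : α → M}

theorem filter_ne_zero_subset_Iio_iff_of_antitone [Zero M] [DecidableEq M]
    [LocallyFiniteOrderBot α] [Fintype α]
    (hg : Antitone g) (hg0 : 0 ≤ g) (a : α) :
    ({i | g i ≠ 0} : Finset α) ⊆ Iio a ↔ g a = 0 := by
  constructor
  · intro hsub
    by_contra ha
    simpa using hsub (mem_filter.2 ⟨mem_univ a, ha⟩)
  · intro ha i hi
    rw [mem_filter] at hi
    rw [mem_Iio]
    by_contra hai
    exact hi.2 (le_antisymm (ha ▸ hg (not_lt.1 hai)) (hg0 i))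

theorem card_filter_ne_zero_le_card_Iio_iff_of_antitone [Zero M] [DecidableEq M]
    [LocallyFiniteOrderBot α] [Fintype α]
    (hg : Antitone g) (hg0 : 0 ≤ g) (a : α) :
    #({i | g i ≠ 0} : Finset α) ≤ #(Iio a) ↔ g a = 0 := by
  refine ⟨fun hcard => ?_, fun ha =>
    card_le_card ((filter_ne_zero_subset_Iio_iff_of_antitone hg hg0 a).2 ha)⟩
  by_contra ha
  have hIic : Iic a ⊆ ({i | g i ≠ 0} : Finset α) := fun i hi =>
    mem_filter.2 ⟨mem_univ i, fun hgi => ha (le_antisymm (hgi ▸ hg (mem_Iic.1 hi)) (hg0 a))⟩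
  have hIic_card := card_le_card hIic
  rw [← Iio_insert, card_insert_of_notMem (by simp)] at hIic_card
  omega

theorem sum_eq_zero_iff_of_isLeast_of_antitone [AddCommMonoid M] [IsOrderedAddMonoid M]
    {s : Finset α} {a : α}
    (hs : IsLeast (s : Set α) a) (hg : Antitone g) (hg0 : 0 ≤ g) :
    ∑ i ∈ s, g i = 0 ↔ g a = 0 := by
  rw [sum_eq_zero_iff_of_nonneg fun i _ => hg0 i]
  exact ⟨fun h => h a hs.1, fun ha i hi =>
    le_antisymm (ha ▸ hg (hs.2 hi)) (hg0 i)⟩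

end Antitone

theorem sum_filter_lt_sub_sum_filter_lt {n k h : ℕ} (hkh : k ≤ h) (f : Fin n → ℝ) :
    (∑ i ∈ univ.filter fun i : Fin n => (i : ℕ) < h, f i) -
        (∑ i ∈ univ.filter fun i : Fin n => (i : ℕ) < k, f i) =
      ∑ i ∈ univ.filter fun i : Fin n => k ≤ (i : ℕ) ∧ (i : ℕ) < h, f i := by
  have hsub : (univ.filter fun i : Fin n => (i : ℕ) < k) ⊆ univ.filter fun i => (i : ℕ) < h :=
    fun i => by simp only [mem_filter, mem_univ, true_and]; omega
  rw [← sum_sdiff_eq_sub hsub]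
  congr 1
  ext i
  simp [and_comm]

theorem l0_le_iff_toph_sub_topk_eq_zero_general {n k h : ℕ} (hkh : k < h) (hhn : h ≤ n)
    (ν : ℝ → ℝ) (hν : ∀ a, 0 ≤ ν a) (hν0 : ∀ a, ν a = 0 ↔ a = 0)
    (x : Fin n → ℝ) (π : Equiv.Perm (Fin n))
    (hsort : ∀ i j : Fin n, i ≤ j → ν (x (π j)) ≤ ν (x (π i))) :
    l0norm x ≤ k ↔
      (∑ i ∈ Finset.univ.filter fun i : Fin n => (i : ℕ) < h, ν (x (π i))) -
        (∑ i ∈ Finset.univ.filter fun i : Fin n => (i : ℕ) < k, ν (x (π i))) = 0 := by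
  set g : Fin n → ℝ := fun i => ν (x (π i))
  have hg : Antitone g := fun i j hij => hsort i j hij
  have hg0 : 0 ≤ g := fun i => hν _
  let a : Fin n := ⟨k, by omega⟩
  have hl0 : l0norm x = #({i | g i ≠ 0} : Finset (Fin n)) := by
    rw [← l0norm_comp_perm x π]
    simp [l0norm, g, hν0]
  have hleast : IsLeast
      ((univ.filter fun i : Fin n => k ≤ (i : ℕ) ∧ (i : ℕ) < h : Finset (Fin n)) : Set (Fin n)) a :=
    ⟨by simp [a, hkh], fun i hi => Fin.le_def.2 (mem_filter.1 hi).2.1⟩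
  rw [sum_filter_lt_sub_sum_filter_lt hkh.le, sum_eq_zero_iff_of_isLeast_of_antitone hleast hg hg0,
    ← card_filter_ne_zero_le_card_Iio_iff_of_antitone hg hg0 a, Fin.card_Iio, hl0]

theorem l0_le_iff_toph_sub_topk_eq_zero {n k h : ℕ} (hk1 : 1 ≤ k) (hkh : k < h) (hhn : h ≤ n)
    (ν : ℝ → ℝ) (hν : ∀ a, 0 ≤ ν a) (hν0 : ∀ a, ν a = 0 ↔ a = 0)
    (x : Fin n → ℝ) (π : Equiv.Perm (Fin n))
    (hsort : ∀ i j : Fin n, i ≤ j → ν (x (π j)) ≤ ν (x (π i))) :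
    l0norm x ≤ k ↔
      (∑ i ∈ Finset.univ.filter fun i : Fin n => (i : ℕ) < h, ν (x (π i))) -
        (∑ i ∈ Finset.univ.filter fun i : Fin n => (i : ℕ) < k, ν (x (π i))) = 0 :=
  l0_le_iff_toph_sub_topk_eq_zero_general hkh hhn ν hν hν0 x π hsort
end

section
/- Let ν: ℝ → ℝ≥0 satisfy ν(a) = 0 iff a = 0, and let π sort ν(x₁),…,ν(xₙ) in decreasing order. Then for x ∈ ℝⁿ, ‖x‖₀ ≤ k if and only if ∑_{i=1}^{n} ν(x_i) − ∑_{i=1}^{k} ν(x_{π(i)}) = 0. -/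
/-!
The difference is the tail sum of the ν(x_{π i}) over i ≥ k, a sum of nonnegative terms, so it
vanishes iff x_{π i} = 0 for all i ≥ k. Because the ν(x_{π i}) decrease and ν vanishes only at 0,
the support of x ∘ π is an initial segment of Fin n, and an initial segment has at most k elements
iff it lies below k.
-/

open Finset

theorem l0norm_le_iff_forall_le_eq_zero {n k : ℕ} {y : Fin n → ℝ}
    (hy : ∀ i j, i ≤ j → y j ≠ 0 → y i ≠ 0) :
    l0norm y ≤ k ↔ ∀ i : Fin n, k ≤ (i : ℕ) → y i = 0 := by
  have hlower : IsLowerSet ((univ.filter fun i => y i ≠ 0 : Finset (Fin n)) : Set (Fin n)) :=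
    fun j i hij hj => by simpa using hy i j hij (by simpa using hj)
  rw [l0norm, Fin.card_le_iff_forall_val_lt_of_isLowerSet hlower]
  simp only [mem_filter, mem_univ, true_and]
  exact forall_congr' fun i => by rw [← not_lt, not_imp_comm]

theorem l0_le_iff_total_sub_topk_eq_zero_general {n k : ℕ}
    (ν : ℝ → ℝ) (hν : ∀ a, 0 ≤ ν a) (hν0 : ∀ a, ν a = 0 ↔ a = 0)
    (x : Fin n → ℝ) (π : Equiv.Perm (Fin n))
    (hsort : ∀ i j : Fin n, i ≤ j → ν (x (π j)) ≤ ν (x (π i))) :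
    l0norm x ≤ k ↔
      (∑ i, ν (x i)) -
        (∑ i ∈ Finset.univ.filter fun i : Fin n => (i : ℕ) < k, ν (x (π i))) = 0 := by
  have hsupport : ∀ i j, i ≤ j → x (π j) ≠ 0 → x (π i) ≠ 0 := fun i j hij hj hi =>
    hj <| (hν0 _).1 <| le_antisymm ((hν0 _).2 hi ▸ hsort i j hij) (hν _)
  have htail : (∑ i, ν (x i)) - ∑ i ∈ univ.filter fun i : Fin n => (i : ℕ) < k, ν (x (π i)) =
      ∑ i ∈ univ.filter fun i : Fin n => ¬(i : ℕ) < k, ν (x (π i)) := by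
    rw [← Equiv.sum_comp π, ← sum_filter_add_sum_filter_not univ fun i : Fin n => (i : ℕ) < k]
    ring
  rw [← l0norm_comp_perm x π, l0norm_le_iff_forall_le_eq_zero (y := x ∘ π) hsupport, htail,
    sum_eq_zero_iff_of_nonneg fun i _ => hν _]
  simp only [mem_filter, mem_univ, true_and, not_lt, hν0, Function.comp_apply]

theorem l0_le_iff_total_sub_topk_eq_zero {n k : ℕ} (hk1 : 1 ≤ k) (hkn : k ≤ n)
    (ν : ℝ → ℝ) (hν : ∀ a, 0 ≤ ν a) (hν0 : ∀ a, ν a = 0 ↔ a = 0)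
    (x : Fin n → ℝ) (π : Equiv.Perm (Fin n))
    (hsort : ∀ i j : Fin n, i ≤ j → ν (x (π j)) ≤ ν (x (π i))) :
    l0norm x ≤ k ↔
      (∑ i, ν (x i)) -
        (∑ i ∈ Finset.univ.filter fun i : Fin n => (i : ℕ) < k, ν (x (π i))) = 0 :=
  l0_le_iff_total_sub_topk_eq_zero_general ν hν hν0 x π hsort
end

section
/- Let φ: ℝⁿ → ℝ be continuous, C ⊆ ℝⁿ nonempty closed convex, 1 ≤ k ≤ n, and define the penalty P(x) = ‖x‖₂² − |||x|||²_{k,2} ≥ 0. Let {ρ_t} be an increasing positive sequence with ρ_t → ∞, and for each t let x_t minimize φ(x) + ρ_t P(x) over x ∈ C. Assume the feasible set {x ∈ C : ‖x‖₀ ≤ k} is nonempty and that a minimizer x̄ of φ over it exists. Then any accumulation point x* of {x_t} satisfies ‖x*‖₀ ≤ k, x* ∈ C, and φ(x*) = φ(x̄); i.e., x* is optimal for min{φ(x) : ‖x‖₀ ≤ k, x ∈ C}. -/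
/-!
Comparing the penalized objective at `x_t` with its value at the feasible `x̄` (where `P` vanishes)
gives `φ x_t + ρ_t P x_t ≤ φ x̄`. Along a subsequence converging to `x*`, the term `φ x_t` converges,
so `P x* > 0` would make the left side tend to `+∞`; hence `P x* = 0`, i.e. `‖x*‖₀ ≤ k`. Since `P ≥ 0`,
also `φ x* ≤ φ x̄`, and the reverse inequality is the optimality of `x̄`.
-/

open Filter

/-- Top-(k,2) norm squared: the maximum, over subsets `S` of cardinality `k`, of
`∑ i ∈ S, x i ^ 2`; this equals the sum of the `k` largest squared entries of `x`. -/
noncomputable def topk2 {n : ℕ} (k : ℕ) (hk : k ≤ n) (x : Fin n → ℝ) : ℝ :=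
  ((Finset.univ : Finset (Fin n)).powersetCard k).sup'
    (Finset.powersetCard_nonempty.mpr (by simpa using hk)) fun S => ∑ i ∈ S, x i ^ 2

open Topology

section PenaltyMethod

variable {X ι : Type*} [TopologicalSpace X] {l : Filter ι} [l.NeBot] {φ P : X → ℝ} {ρ : ι → ℝ}
  {x : ι → X} {c : ℝ} {xstar : X}

theorem penalty_nonpos_of_tendsto (hφ : Continuous φ) (hP : Continuous P)
    (hρ : Tendsto ρ l atTop) (hbound : ∀ᶠ t in l, φ (x t) + ρ t * P (x t) ≤ c)
    (hx : Tendsto x l (𝓝 xstar)) : P xstar ≤ 0 := by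
  by_contra! hpos
  have hpenalized : Tendsto (fun t => φ (x t) + ρ t * P (x t)) l atTop :=
    ((hφ.tendsto xstar).comp hx).add_atTop (hρ.atTop_mul_pos hpos ((hP.tendsto xstar).comp hx))
  obtain ⟨t, hle, hlt⟩ := (hbound.and (hpenalized.eventually_gt_atTop c)).exists
  exact hle.not_gt hlt

theorem objective_le_of_tendsto (hφ : Continuous φ) (hP : ∀ y, 0 ≤ P y)
    (hρ : Tendsto ρ l atTop) (hbound : ∀ᶠ t in l, φ (x t) + ρ t * P (x t) ≤ c)
    (hx : Tendsto x l (𝓝 xstar)) : φ xstar ≤ c :=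
  le_of_tendsto (f := fun t => φ (x t)) ((hφ.tendsto xstar).comp hx) <|
    (hbound.and (hρ.eventually_ge_atTop 0)).mono fun t ⟨hle, hρt⟩ => by
      linarith [mul_nonneg hρt (hP (x t))]

end PenaltyMethod

section TopK

variable {n k : ℕ} (hk : k ≤ n)

theorem topk2_le_sum_sq (x : Fin n → ℝ) : topk2 k hk x ≤ ∑ i, x i ^ 2 :=
  Finset.sup'_le _ _ fun S _ =>
    Finset.sum_le_sum_of_subset_of_nonneg (Finset.subset_univ S) fun i _ _ => sq_nonneg (x i)

theorem topk2_eq_sum_sq_iff {x : Fin n → ℝ} : topk2 k hk x = ∑ i, x i ^ 2 ↔ l0norm x ≤ k := by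
  classical
  constructor
  · intro h
    obtain ⟨S, hS, hSmax⟩ := Finset.exists_mem_eq_sup'
      (Finset.powersetCard_nonempty.mpr (by simpa using hk) :
        ((Finset.univ : Finset (Fin n)).powersetCard k).Nonempty)
      fun S => ∑ i ∈ S, x i ^ 2
    have hcompl : ∑ i ∈ Sᶜ, x i ^ 2 = 0 := by
      have := Finset.sum_add_sum_compl S fun i => x i ^ 2
      simp only [topk2] at h
      linarith
    have hsupport : (Finset.univ.filter fun i => x i ≠ 0) ⊆ S := by
      intro i hi
      by_contra hiS
      have hxi := (Finset.sum_eq_zero_iff_of_nonneg fun j _ => sq_nonneg (x j)).mp hcompl i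
        (Finset.mem_compl.mpr hiS)
      exact (Finset.mem_filter.mp hi).2 (pow_eq_zero_iff two_ne_zero |>.mp hxi)
    exact (Finset.card_le_card hsupport).trans (Finset.mem_powersetCard.mp hS).2.le
  · intro hx
    obtain ⟨S, hsupport, hcard⟩ := Finset.exists_superset_card_eq hx (by simpa using hk)
    refine (topk2_le_sum_sq hk x).antisymm ?_
    have hsum : ∑ i ∈ S, x i ^ 2 = ∑ i, x i ^ 2 :=
      Finset.sum_subset (Finset.subset_univ S) fun i _ hiS => by
        have : x i = 0 := by_contra fun hi => hiS (hsupport (by simp [hi]))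
        simp [this]
    exact hsum ▸ Finset.le_sup' (fun S : Finset (Fin n) => ∑ i ∈ S, x i ^ 2)
      (Finset.mem_powersetCard.mpr ⟨Finset.subset_univ S, hcard⟩)

theorem continuous_topk2 : Continuous (topk2 k hk) :=
  Continuous.finset_sup'_apply _ fun _ _ =>
    continuous_finsetSum _ fun i _ => (continuous_apply i).pow 2

end TopK

theorem penalty_method_accumulation_point_optimal_general {n k : ℕ} (hkn : k ≤ n)
    (φ : (Fin n → ℝ) → ℝ) (hφ : Continuous φ)
    (C : Set (Fin n → ℝ)) (hCclosed : IsClosed C)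
    (P : (Fin n → ℝ) → ℝ) (hP : ∀ x, P x = (∑ i, (x i) ^ 2) - topk2 k hkn x)
    (ρ : ℕ → ℝ)
    (hρtop : Tendsto ρ atTop atTop)
    (xseq : ℕ → Fin n → ℝ)
    (hmin : ∀ t, xseq t ∈ C ∧ ∀ y ∈ C, φ (xseq t) + ρ t * P (xseq t) ≤ φ y + ρ t * P y)
    (xbar : Fin n → ℝ) (hxbarC : xbar ∈ C) (hxbark : l0norm xbar ≤ k)
    (hxbaropt : ∀ y ∈ C, l0norm y ≤ k → φ xbar ≤ φ y)
    (xstar : Fin n → ℝ) (ψ : ℕ → ℕ) (hψ : StrictMono ψ)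
    (hconv : Tendsto (fun t => xseq (ψ t)) atTop (nhds xstar)) :
    l0norm xstar ≤ k ∧ xstar ∈ C ∧ φ xstar = φ xbar := by
  have hPnonneg (y : Fin n → ℝ) : 0 ≤ P y := by linarith [hP y, topk2_le_sum_sq hkn y]
  have hPcont : Continuous P := by
    rw [show P = _ from funext hP]
    exact (continuous_finsetSum _ fun i _ => (continuous_apply i).pow 2).sub
      (continuous_topk2 hkn)
  have hPxbar : P xbar = 0 := by rw [hP, (topk2_eq_sum_sq_iff hkn).mpr hxbark, sub_self]
  have hbound : ∀ᶠ t in atTop, φ (xseq (ψ t)) + ρ (ψ t) * P (xseq (ψ t)) ≤ φ xbar :=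
    Eventually.of_forall fun t => by simpa [hPxbar] using (hmin (ψ t)).2 xbar hxbarC
  have hρψ : Tendsto (ρ ∘ ψ) atTop atTop := hρtop.comp hψ.tendsto_atTop
  have hxstarC : xstar ∈ C :=
    hCclosed.mem_of_tendsto hconv (Eventually.of_forall fun t => (hmin (ψ t)).1)
  have hPxstar : P xstar = 0 :=
    (penalty_nonpos_of_tendsto hφ hPcont hρψ hbound hconv).antisymm (hPnonneg xstar)
  have hl0 : l0norm xstar ≤ k := (topk2_eq_sum_sq_iff hkn).mp (by linarith [hP xstar])
  exact ⟨hl0, hxstarC, (objective_le_of_tendsto hφ hPnonneg hρψ hbound hconv).antisymm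
    (hxbaropt xstar hxstarC hl0)⟩

theorem penalty_method_accumulation_point_optimal {n k : ℕ} (hk1 : 1 ≤ k) (hkn : k ≤ n)
    (φ : (Fin n → ℝ) → ℝ) (hφ : Continuous φ)
    (C : Set (Fin n → ℝ)) (hCne : C.Nonempty) (hCclosed : IsClosed C) (hCconv : Convex ℝ C)
    (P : (Fin n → ℝ) → ℝ) (hP : ∀ x, P x = (∑ i, (x i) ^ 2) - topk2 k hkn x)
    (ρ : ℕ → ℝ) (hρpos : ∀ t, 0 < ρ t) (hρmono : StrictMono ρ)
    (hρtop : Tendsto ρ atTop atTop)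
    (xseq : ℕ → Fin n → ℝ)
    (hmin : ∀ t, xseq t ∈ C ∧ ∀ y ∈ C, φ (xseq t) + ρ t * P (xseq t) ≤ φ y + ρ t * P y)
    (xbar : Fin n → ℝ) (hxbarC : xbar ∈ C) (hxbark : l0norm xbar ≤ k)
    (hxbaropt : ∀ y ∈ C, l0norm y ≤ k → φ xbar ≤ φ y)
    (xstar : Fin n → ℝ) (ψ : ℕ → ℕ) (hψ : StrictMono ψ)
    (hconv : Tendsto (fun t => xseq (ψ t)) atTop (nhds xstar)) :
    l0norm xstar ≤ k ∧ xstar ∈ C ∧ φ xstar = φ xbar :=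
  penalty_method_accumulation_point_optimal_general hkn φ hφ C hCclosed P hP ρ hρtop xseq hmin xbar
    hxbarC hxbark hxbaropt xstar ψ hψ hconv
end

section
/- Descent lemma for the proximal DC step: Let f: ℝⁿ → ℝ be differentiable with L-Lipschitz gradient, g₁ proper lower semicontinuous convex, g₂ convex, F = f + g₁ − g₂. Given x ∈ dom g₁, s ∈ ∂g₂(x), and l > 0, let x⁺ be the minimizer of (l/2)‖z‖₂² + g₁(z) − zᵀ(l x − ∇f(x) + s) over z ∈ ℝⁿ. Then F(x⁺) ≤ F(x) − ((l − L)/2)‖x⁺ − x‖₂². -/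
/-!
The descent lemma bounds `f x⁺` by its quadratic model at `x` with curvature `L`; comparing `x⁺`
with `x` in the proximal objective (after completing the square) bounds `g₁ x⁺` with curvature
`l`; and the subgradient inequality for `s` bounds `-g₂ x⁺`. The linear terms in `∇f x` and `s`
cancel in the sum.
-/

open RealInnerProductSpace

section

variable {E : Type*} [NormedAddCommGroup E] [InnerProductSpace ℝ E]

theorem HasGradientAt.hasDerivAt_comp_add_smul [CompleteSpace E] {f : E → ℝ} {g x v : E} {t : ℝ}
    (h : HasGradientAt f g (x + t • v)) :
    HasDerivAt (fun t : ℝ => f (x + t • v)) ⟪g, v⟫ t := by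
  have hline : HasDerivAt (fun t : ℝ => x + t • v) v t := by
    simpa using ((hasDerivAt_id t).smul_const v).const_add x
  simpa [InnerProductSpace.toDual_apply_apply, Function.comp_def] using
    h.hasFDerivAt.comp_hasDerivAt t hline

theorem inner_add_smul_le_of_norm_sub_le {G : E → E} {L : ℝ}
    (hL : ∀ x y, ‖G x - G y‖ ≤ L * ‖x - y‖) (x v : E) {t : ℝ} (ht : 0 ≤ t) :
    ⟪G (x + t • v), v⟫ ≤ ⟪G x, v⟫ + L * t * ‖v‖ ^ 2 := by
  have hG : ‖G (x + t • v) - G x‖ ≤ L * t * ‖v‖ := by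
    simpa [norm_smul, abs_of_nonneg ht, mul_assoc] using hL (x + t • v) x
  calc ⟪G (x + t • v), v⟫ = ⟪G x, v⟫ + ⟪G (x + t • v) - G x, v⟫ := by
        rw [inner_sub_left]; ring
    _ ≤ ⟪G x, v⟫ + ‖G (x + t • v) - G x‖ * ‖v‖ := by gcongr; exact real_inner_le_norm _ _
    _ ≤ ⟪G x, v⟫ + L * t * ‖v‖ * ‖v‖ := by gcongr
    _ = ⟪G x, v⟫ + L * t * ‖v‖ ^ 2 := by ring

theorem le_add_inner_add_sq_of_lipschitz_gradient [CompleteSpace E] {f : E → ℝ} {f' : E → E}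
    (hf : ∀ x, HasGradientAt f (f' x) x) {L : ℝ} (hL : ∀ x y, ‖f' x - f' y‖ ≤ L * ‖x - y‖)
    (x y : E) : f y ≤ f x + ⟪f' x, y - x⟫ + L / 2 * ‖y - x‖ ^ 2 := by
  set v := y - x
  have hφ (t : ℝ) : HasDerivAt (fun t : ℝ => f (x + t • v)) ⟪f' (x + t • v), v⟫ t :=
    (hf _).hasDerivAt_comp_add_smul
  have hB (t : ℝ) : HasDerivAt (fun t : ℝ => f x + t * ⟪f' x, v⟫ + L / 2 * t ^ 2 * ‖v‖ ^ 2)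
      (⟪f' x, v⟫ + L * t * ‖v‖ ^ 2) t := by
    refine ((((hasDerivAt_id' t).mul_const ⟪f' x, v⟫).const_add (f x)).add
      (((hasDerivAt_pow 2 t).const_mul (L / 2)).mul_const (‖v‖ ^ 2))).congr_deriv ?_
    push_cast
    ring
  have := image_le_of_deriv_right_le_deriv_boundary
    (fun t _ => (hφ t).continuousAt.continuousWithinAt) (fun t _ => (hφ t).hasDerivWithinAt)
    (by simp) (fun t _ => (hB t).continuousAt.continuousWithinAt)
    (fun t _ => (hB t).hasDerivWithinAt)
    (fun t ht => inner_add_smul_le_of_norm_sub_le hL x v ht.1) (Set.right_mem_Icc.2 zero_le_one)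
  simpa [v] using this

theorem add_inner_add_sq_le_of_prox_minimizer {g : E → ℝ} {l : ℝ} {x d xp : E}
    (hxp : ∀ z, (l / 2) * ‖xp‖ ^ 2 + g xp - ⟪xp, l • x - d⟫ ≤
      (l / 2) * ‖z‖ ^ 2 + g z - ⟪z, l • x - d⟫) :
    g xp + ⟪d, xp - x⟫ + l / 2 * ‖xp - x‖ ^ 2 ≤ g x := by
  have hsq (z : E) : (l / 2) * ‖z‖ ^ 2 - ⟪z, l • x - d⟫ =
      l / 2 * ‖z - x‖ ^ 2 + ⟪d, z - x⟫ + (⟪d, x⟫ - l / 2 * ‖x‖ ^ 2) := by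
    rw [norm_sub_sq_real, inner_sub_right, inner_sub_right, real_inner_smul_right,
      real_inner_comm d z]
    ring
  have hx := hsq x
  rw [sub_self, norm_zero, inner_zero_right] at hx
  linarith [hxp x, hsq xp]

end

theorem proximal_dc_descent_lemma_general {n : ℕ}
    (f g₁ g₂ : EuclideanSpace ℝ (Fin n) → ℝ)
    (f' : EuclideanSpace ℝ (Fin n) → EuclideanSpace ℝ (Fin n))
    (hf : ∀ x, HasGradientAt f (f' x) x)
    (L : ℝ) (hL : ∀ x y, ‖f' x - f' y‖ ≤ L * ‖x - y‖)
    (F : EuclideanSpace ℝ (Fin n) → ℝ) (hF : ∀ z, F z = f z + g₁ z - g₂ z)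
    (x s : EuclideanSpace ℝ (Fin n))
    (hs : ∀ y, g₂ x + ⟪s, y - x⟫ ≤ g₂ y)
    (l : ℝ)
    (xp : EuclideanSpace ℝ (Fin n))
    (hxp : ∀ z, (l / 2) * ‖xp‖ ^ 2 + g₁ xp - ⟪xp, l • x - f' x + s⟫ ≤
      (l / 2) * ‖z‖ ^ 2 + g₁ z - ⟪z, l • x - f' x + s⟫) :
    F xp ≤ F x - ((l - L) / 2) * ‖xp - x‖ ^ 2 := by
  have hf_le := le_add_inner_add_sq_of_lipschitz_gradient hf hL x xp
  have hprox := add_inner_add_sq_le_of_prox_minimizer (g := g₁) (d := f' x - s)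
    (by simpa only [sub_add] using hxp)
  have hsub := hs xp
  rw [inner_sub_left] at hprox
  rw [hF, hF]
  linarith

theorem proximal_dc_descent_lemma {n : ℕ}
    (f g₁ g₂ : EuclideanSpace ℝ (Fin n) → ℝ)
    (f' : EuclideanSpace ℝ (Fin n) → EuclideanSpace ℝ (Fin n))
    (hf : ∀ x, HasGradientAt f (f' x) x)
    (L : ℝ) (hL : ∀ x y, ‖f' x - f' y‖ ≤ L * ‖x - y‖)
    (hg₁lsc : LowerSemicontinuous g₁) (hg₁ : ConvexOn ℝ Set.univ g₁)
    (hg₂ : ConvexOn ℝ Set.univ g₂)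
    (F : EuclideanSpace ℝ (Fin n) → ℝ) (hF : ∀ z, F z = f z + g₁ z - g₂ z)
    (x s : EuclideanSpace ℝ (Fin n))
    (hs : ∀ y, g₂ x + ⟪s, y - x⟫ ≤ g₂ y)
    (l : ℝ) (hl : 0 < l)
    (xp : EuclideanSpace ℝ (Fin n))
    (hxp : ∀ z, (l / 2) * ‖xp‖ ^ 2 + g₁ xp - ⟪xp, l • x - f' x + s⟫ ≤
      (l / 2) * ‖z‖ ^ 2 + g₁ z - ⟪z, l • x - f' x + s⟫) :
    F xp ≤ F x - ((l - L) / 2) * ‖xp - x‖ ^ 2 :=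
  proximal_dc_descent_lemma_general f g₁ g₂ f' hf L hL F hF x s hs l xp hxp
end

section
/- Subdifferential of the top-(k,2) norm: for x ∈ ℝⁿ with a permutation π such that x_{π(1)}² ≥ ⋯ ≥ x_{π(n)}², and assuming the k-th and (k+1)-th sorted squared values are distinct (x_{π(k)}² > x_{π(k+1)}²), the vector v with v_{π(i)} = 2x_{π(i)} for i ≤ k and v_{π(i)} = 0 for i > k is a subgradient of the convex function |||·|||²_{k,2} at x, i.e., |||y|||²_{k,2} ≥ |||x|||²_{k,2} + ⟨v, y − x⟩ for all y ∈ ℝⁿ. -/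
/-!
On the set `S` of the `k` largest squared entries of `x`, the function `topk2 k` agrees with
the quadratic `q_S y = ∑ i ∈ S, y i ^ 2`, and it dominates `q_S` everywhere. Hence the gradient
`v = 2 x · 𝟙_S` of `q_S` at `x`, which is a subgradient of the convex `q_S`, is also a
subgradient of `topk2 k` at `x`.
-/

open Finset

namespace Finset

variable {ι M : Type*} [AddCommMonoid M] [PartialOrder M] [IsOrderedAddMonoid M]
  {f : ι → M} {s t : Finset ι}

theorem sum_le_sum_of_card_eq_of_forall_le (hcard : #s = #t)
    (h : ∀ a ∈ s, ∀ b ∈ t, f a ≤ f b) : ∑ a ∈ s, f a ≤ ∑ b ∈ t, f b := by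
  let e : s ≃ t := Fintype.equivOfCardEq (by simpa using hcard)
  calc ∑ a ∈ s, f a = ∑ a : s, f a := (sum_coe_sort s f).symm
    _ ≤ ∑ a : s, f (e a) := sum_le_sum fun a _ => h a a.2 (e a) (e a).2
    _ = ∑ b : t, f b := e.sum_comp (fun b : t => f b)
    _ = ∑ b ∈ t, f b := sum_coe_sort t f

theorem sum_le_sum_of_card_eq_of_forall_notMem_le [DecidableEq ι] (hcard : #t = #s)
    (h : ∀ a ∈ s, ∀ b ∉ s, f b ≤ f a) : ∑ i ∈ t, f i ≤ ∑ i ∈ s, f i := by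
  have hsdiff : ∑ i ∈ t \ s, f i ≤ ∑ i ∈ s \ t, f i :=
    sum_le_sum_of_card_eq_of_forall_le (card_sdiff_comm hcard)
      fun b hb a ha => h a (mem_sdiff.1 ha).1 b (mem_sdiff.1 hb).2
  calc ∑ i ∈ t, f i = ∑ i ∈ t ∩ s, f i + ∑ i ∈ t \ s, f i :=
        (sum_inter_add_sum_sdiff t s f).symm
    _ ≤ ∑ i ∈ s ∩ t, f i + ∑ i ∈ s \ t, f i := by rw [inter_comm]; gcongr
    _ = ∑ i ∈ s, f i := sum_inter_add_sum_sdiff s t f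

end Finset

theorem sum_sq_le_topk2 {n k : ℕ} (hk : k ≤ n) (y : Fin n → ℝ) {s : Finset (Fin n)}
    (hs : #s = k) : ∑ i ∈ s, y i ^ 2 ≤ topk2 k hk y :=
  le_sup' (fun S => ∑ i ∈ S, y i ^ 2) (mem_powersetCard.2 ⟨subset_univ s, hs⟩)

theorem topk2_eq_sum_sq {n k : ℕ} (hk : k ≤ n) (x : Fin n → ℝ) {s : Finset (Fin n)}
    (hs : #s = k) (htop : ∀ a ∈ s, ∀ b ∉ s, x b ^ 2 ≤ x a ^ 2) :
    topk2 k hk x = ∑ i ∈ s, x i ^ 2 :=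
  le_antisymm
    (sup'_le _ _ fun _ ht =>
      sum_le_sum_of_card_eq_of_forall_notMem_le ((mem_powersetCard.1 ht).2.trans hs.symm) htop)
    (sum_sq_le_topk2 hk x hs)

theorem sum_sq_add_sum_two_mul_sub_le_sum_sq {ι : Type*} (s : Finset ι) (x y : ι → ℝ) :
    ∑ i ∈ s, x i ^ 2 + ∑ i ∈ s, 2 * x i * (y i - x i) ≤ ∑ i ∈ s, y i ^ 2 := by
  rw [← sum_add_distrib]
  exact sum_le_sum fun i _ => by nlinarith [sq_nonneg (y i - x i)]

theorem topk2_subgradient {n k : ℕ} (hkn : k < n)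
    (x : Fin n → ℝ) (π : Equiv.Perm (Fin n))
    (hsort : ∀ i j : Fin n, i ≤ j → (x (π j)) ^ 2 ≤ (x (π i)) ^ 2)
    (v : Fin n → ℝ)
    (hv : ∀ i, v i = if ((π.symm i : Fin n) : ℕ) < k then 2 * x i else 0) :
    ∀ y : Fin n → ℝ,
      topk2 k hkn.le x + ∑ i, v i * (y i - x i) ≤ topk2 k hkn.le y := by
  intro y
  set S : Finset (Fin n) := {i | ((π.symm i : Fin n) : ℕ) < k}
  have hS : #S = k := by
    rw [card_equiv π.symm (t := {i : Fin n | i < k}) (by simp [S]), Fin.card_filter_val_lt,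
      min_eq_right hkn.le]
  have htop : ∀ a ∈ S, ∀ b ∉ S, x b ^ 2 ≤ x a ^ 2 := by
    intro a ha b hb
    simp only [S, mem_filter, mem_univ, true_and, not_lt] at ha hb
    simpa using hsort (π.symm a) (π.symm b) (Fin.le_def.2 (by omega))
  have hinner : ∑ i, v i * (y i - x i) = ∑ i ∈ S, 2 * x i * (y i - x i) := by
    simp only [hv, ite_mul, zero_mul, S, sum_filter]
  rw [topk2_eq_sum_sq hkn.le x hS htop, hinner]
  exact (sum_sq_add_sum_two_mul_sub_le_sum_sq S x y).trans (sum_sq_le_topk2 hkn.le y hS)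
end
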